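/- Suppose there is an element u of 𝔥 such that φ_u = 0, the ℂ-linear span of {x_u, y_u} is one-dimensional, and 𝗑_u·|y_u|² + 𝗒_u·|x_u|² + 2·Im(x_u y_u†·conj(η_u)) = 0. Then there exist a sequence (h_m) of elements of H and constants c, C > 0 such that ‖h_m‖ → ∞ as m → ∞ and c·‖h_m‖ ≤ ‖ρ(h_m)‖ ≤ C·‖h_m‖ for every m. -/

import Mathlib

open scoped BigOperators

noncomputable section

/-- The matrix of the Hermitian form defining `SU(2,n)` (indices are 0-based;
the paper's 1-based entry `(i,j)` corresponds to `(i-1, j-1)` here). -/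
def Jmat (n : ℕ) : Matrix (Fin (n+2)) (Fin (n+2)) ℂ := fun i j =>
  if ((i:ℕ) = 0 ∧ (j:ℕ) = n+1) ∨ ((i:ℕ) = 1 ∧ (j:ℕ) = n)
      ∨ ((i:ℕ) = n ∧ (j:ℕ) = 1) ∨ ((i:ℕ) = n+1 ∧ (j:ℕ) = 0)
      ∨ (2 ≤ (i:ℕ) ∧ (i:ℕ) + 1 ≤ n ∧ i = j)
  then 1 else 0

/-- Membership in `G = SU(2,n)`. -/
def inG (n : ℕ) (g : Matrix (Fin (n+2)) (Fin (n+2)) ℂ) : Prop :=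
  g.conjTranspose * Jmat n * g = Jmat n ∧ g.det = 1

/-- Membership in the Lie algebra `𝔫` of strictly upper-triangular matrices `u`
with `uᴴJ + Ju = 0`. -/
def inLieN (n : ℕ) (u : Matrix (Fin (n+2)) (Fin (n+2)) ℂ) : Prop :=
  (∀ i j : Fin (n+2), (j:ℕ) ≤ (i:ℕ) → u i j = 0) ∧
  u.conjTranspose * Jmat n + Jmat n * u = 0

def phiC (n : ℕ) (u : Matrix (Fin (n+2)) (Fin (n+2)) ℂ) : ℂ :=
  u ⟨0, by omega⟩ ⟨1, by omega⟩

/-- The vector `x_u ∈ ℂ^{n-2}`, padded by zeros to a vector indexed by `Fin (n+2)`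
(its meaningful entries sit in columns `2,…,n-1`, i.e. the paper's `3,…,n`). -/
def xV (n : ℕ) (u : Matrix (Fin (n+2)) (Fin (n+2)) ℂ) : Fin (n+2) → ℂ := fun j =>
  if 2 ≤ (j:ℕ) ∧ (j:ℕ) + 1 ≤ n then u ⟨0, by omega⟩ j else 0

/-- The vector `y_u ∈ ℂ^{n-2}`, padded by zeros. -/
def yV (n : ℕ) (u : Matrix (Fin (n+2)) (Fin (n+2)) ℂ) : Fin (n+2) → ℂ := fun j =>
  if 2 ≤ (j:ℕ) ∧ (j:ℕ) + 1 ≤ n then u ⟨1, by omega⟩ j else 0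

def etaC (n : ℕ) (u : Matrix (Fin (n+2)) (Fin (n+2)) ℂ) : ℂ :=
  u ⟨0, by omega⟩ ⟨n, by omega⟩

/-- `𝗑_u = Im u_{1,n+2}`. -/
def sxR (n : ℕ) (u : Matrix (Fin (n+2)) (Fin (n+2)) ℂ) : ℝ :=
  (u ⟨0, by omega⟩ ⟨n+1, by omega⟩).im

/-- `𝗒_u = Im u_{2,n+1}`. -/
def syR (n : ℕ) (u : Matrix (Fin (n+2)) (Fin (n+2)) ℂ) : ℝ :=
  (u ⟨1, by omega⟩ ⟨n, by omega⟩).im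

/-- `x y† = Σ xⱼ ȳⱼ`. -/
def dotC (n : ℕ) (x y : Fin (n+2) → ℂ) : ℂ := ∑ j, x j * (starRingEnd ℂ) (y j)

/-- `|x|²` (a real number). -/
def nsqR (n : ℕ) (x : Fin (n+2) → ℂ) : ℝ := ∑ j, Complex.normSq (x j)

/-- Membership in `𝔷 = {u ∈ 𝔥 : φ_u = 0, x_u = 0, y_u = 0}`. -/
def inZ (n : ℕ) (𝔥 : Submodule ℝ (Matrix (Fin (n+2)) (Fin (n+2)) ℂ))
    (u : Matrix (Fin (n+2)) (Fin (n+2)) ℂ) : Prop :=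
  u ∈ 𝔥 ∧ phiC n u = 0 ∧ xV n u = 0 ∧ yV n u = 0

/-- Membership in the root space `𝔘_{2α+2β}`. -/
def inU2a2b (n : ℕ) (u : Matrix (Fin (n+2)) (Fin (n+2)) ℂ) : Prop :=
  inLieN n u ∧ phiC n u = 0 ∧ xV n u = 0 ∧ yV n u = 0 ∧ etaC n u = 0 ∧ syR n u = 0

/-- `H = exp 𝔥`, the image of `𝔥` under the matrix exponential. -/
def expSet (n : ℕ) (𝔥 : Submodule ℝ (Matrix (Fin (n+2)) (Fin (n+2)) ℂ)) :
    Set (Matrix (Fin (n+2)) (Fin (n+2)) ℂ) :=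
  (fun u => NormedSpace.exp u) '' (𝔥 : Set (Matrix (Fin (n+2)) (Fin (n+2)) ℂ))

/-- `‖h‖`: the maximum of the absolute values of the entries of `h`. -/
def entryNorm (n : ℕ) (h : Matrix (Fin (n+2)) (Fin (n+2)) ℂ) : ℝ :=
  Finset.univ.sup' Finset.univ_nonempty
    (fun p : Fin (n+2) × Fin (n+2) => ‖h p.1 p.2‖)

/-- `‖ρ(h)‖`: the maximum of the absolute values of the determinants of all
`2 × 2` submatrices of `h`. -/
def rhoNorm (n : ℕ) (h : Matrix (Fin (n+2)) (Fin (n+2)) ℂ) : ℝ :=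
  Finset.univ.sup' Finset.univ_nonempty
    (fun q : (Fin (n+2) × Fin (n+2)) × Fin (n+2) × Fin (n+2) =>
      ‖h q.1.1 q.2.1 * h q.1.2 q.2.2 - h q.1.1 q.2.2 * h q.1.2 q.2.1‖)

/-- `Δ(h)`: the determinant of the 2×2 submatrix of `h` in rows 1,2 and
columns n+1, n+2 (1-based). -/
def DeltaC (n : ℕ) (h : Matrix (Fin (n+2)) (Fin (n+2)) ℂ) : ℂ :=
  h ⟨0, by omega⟩ ⟨n, by omega⟩ * h ⟨1, by omega⟩ ⟨n+1, by omega⟩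
    - h ⟨0, by omega⟩ ⟨n+1, by omega⟩ * h ⟨1, by omega⟩ ⟨n, by omega⟩

def sig (n : ℕ) : Fin (n+2) → Fin (n+2) := fun i =>
  if (i:ℕ) = 0 then ⟨n+1, by omega⟩ else if (i:ℕ) = 1 then ⟨n, by omega⟩
  else if (i:ℕ) = n then ⟨1, by omega⟩ else if (i:ℕ) = n+1 then ⟨0, by omega⟩ else i

lemma Jmat_apply {n : ℕ} (hn : 2 ≤ n) (i j : Fin (n+2)) :
    Jmat n i j = if j = sig n i then 1 else 0 := by
  rcases i with ⟨i, hi⟩; rcases j with ⟨j, hj⟩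
  simp only [Jmat, sig, Fin.mk.injEq, apply_ite (Fin.val), Fin.ext_iff]
  split_ifs <;> first | rfl | omega

lemma Jmat_symm {n : ℕ} (i j : Fin (n+2)) : Jmat n i j = Jmat n j i := by
  rcases i with ⟨i, hi⟩; rcases j with ⟨j, hj⟩
  simp only [Jmat, Fin.mk.injEq]
  split_ifs <;> first | rfl | omega

lemma uRel {n : ℕ} (hn : 2 ≤ n) {u : Matrix (Fin (n+2)) (Fin (n+2)) ℂ}
    (hu : inLieN n u) (i j : Fin (n+2)) :
    (starRingEnd ℂ) (u (sig n j) i) + u (sig n i) j = 0 := by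
  have h := congrFun (congrFun hu.2 i) j
  simp only [Matrix.add_apply, Matrix.mul_apply, Matrix.conjTranspose_apply,
    Matrix.zero_apply] at h
  have e1 : ∑ k, star (u k i) * Jmat n k j = (starRingEnd ℂ) (u (sig n j) i) := by
    rw [Finset.sum_eq_single (sig n j)]
    · rw [Jmat_symm, Jmat_apply hn, if_pos rfl, mul_one]; rfl
    · intro k _ hk; rw [Jmat_symm, Jmat_apply hn, if_neg hk, mul_zero]
    · intro hk; exact absurd (Finset.mem_univ _) hk
  have e2 : ∑ k, Jmat n i k * u k j = u (sig n i) j := by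
    rw [Finset.sum_eq_single (sig n i)]
    · rw [Jmat_apply hn, if_pos rfl, one_mul]
    · intro k _ hk; rw [Jmat_apply hn, if_neg hk, zero_mul]
    · intro hk; exact absurd (Finset.mem_univ _) hk
  rw [e1, e2] at h; exact h

lemma sig0 {n : ℕ} (hn : 2 ≤ n) : sig n ⟨0, by omega⟩ = ⟨n+1, by omega⟩ := by simp [sig]
lemma sig1 {n : ℕ} (hn : 2 ≤ n) : sig n ⟨1, by omega⟩ = ⟨n, by omega⟩ := by simp [sig]
lemma sign' {n : ℕ} (hn : 2 ≤ n) : sig n ⟨n, by omega⟩ = ⟨1, by omega⟩ := by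
  have h0 : n ≠ 0 := by omega
  have h1 : n ≠ 1 := by omega
  simp [sig, h0, h1]
lemma sign1 {n : ℕ} (hn : 2 ≤ n) : sig n ⟨n+1, by omega⟩ = ⟨0, by omega⟩ := by
  have h0 : n + 1 ≠ 0 := by omega
  have h1 : n + 1 ≠ 1 := by omega
  have h2 : n + 1 ≠ n := by omega
  simp [sig, h0, h1, h2]
lemma sigmid {n : ℕ} (k : Fin (n+2)) (h2 : 2 ≤ (k:ℕ)) (hk : (k:ℕ) < n) :
    sig n k = k := by
  have h0 : (k:ℕ) ≠ 0 := by omega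
  have h1 : (k:ℕ) ≠ 1 := by omega
  have h3 : (k:ℕ) ≠ n := by omega
  have h4 : (k:ℕ) ≠ n+1 := by omega
  simp [sig, h0, h1, h3, h4]

section U
variable {n : ℕ} {u : Matrix (Fin (n+2)) (Fin (n+2)) ℂ}

lemma ucol0 (htri : ∀ i j : Fin (n+2), (j:ℕ) ≤ (i:ℕ) → u i j = 0) (i : Fin (n+2)) :
    u i ⟨0, by omega⟩ = 0 := htri i _ (Nat.zero_le _)

lemma ucol1 (htri : ∀ i j : Fin (n+2), (j:ℕ) ≤ (i:ℕ) → u i j = 0)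
    (hphi : u ⟨0, by omega⟩ ⟨1, by omega⟩ = 0) (i : Fin (n+2)) :
    u i ⟨1, by omega⟩ = 0 := by
  by_cases h : (i:ℕ) = 0
  · have : i = ⟨0, by omega⟩ := Fin.ext h
    rw [this]; exact hphi
  · exact htri i _ (by simp; omega)

lemma urow_n1 (htri : ∀ i j : Fin (n+2), (j:ℕ) ≤ (i:ℕ) → u i j = 0) (j : Fin (n+2)) :
    u ⟨n+1, by omega⟩ j = 0 := htri _ j (by have := j.isLt; simp; omega)

lemma urow_n (hn : 2 ≤ n)
    (htri : ∀ i j : Fin (n+2), (j:ℕ) ≤ (i:ℕ) → u i j = 0)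
    (hrel : ∀ i j, (starRingEnd ℂ) (u (sig n j) i) + u (sig n i) j = 0)
    (hphi : u ⟨0, by omega⟩ ⟨1, by omega⟩ = 0) (j : Fin (n+2)) :
    u ⟨n, by omega⟩ j = 0 := by
  by_cases h : (j:ℕ) = n+1
  · have hj : j = ⟨n+1, by omega⟩ := Fin.ext h
    rw [hj]
    have h2 := hrel ⟨1, by omega⟩ ⟨n+1, by omega⟩
    rw [sig1 hn, sign1 hn, hphi] at h2
    simpa using h2
  · exact htri _ j (by have := j.isLt; simp; omega)

lemma umid0 (hn : 2 ≤ n)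
    (htri : ∀ i j : Fin (n+2), (j:ℕ) ≤ (i:ℕ) → u i j = 0)
    (hrel : ∀ i j, (starRingEnd ℂ) (u (sig n j) i) + u (sig n i) j = 0)
    (i j : Fin (n+2)) (h2 : 2 ≤ (i:ℕ)) (hjn : (j:ℕ) < n) :
    u i j = 0 := by
  by_cases hij : (j:ℕ) ≤ (i:ℕ)
  · exact htri i j hij
  · have h2j : 2 ≤ (j:ℕ) := by omega
    have hin : (i:ℕ) < n := by omega
    have h3 := hrel i j
    rw [sigmid i h2 hin, sigmid j h2j hjn, htri j i (by omega)] at h3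
    simpa using h3

lemma u_rn (hn : 2 ≤ n)
    (htri : ∀ i j : Fin (n+2), (j:ℕ) ≤ (i:ℕ) → u i j = 0)
    (hrel : ∀ i j, (starRingEnd ℂ) (u (sig n j) i) + u (sig n i) j = 0)
    (hphi : u ⟨0, by omega⟩ ⟨1, by omega⟩ = 0)
    (r : Fin (n+2)) (h2 : 2 ≤ (r:ℕ)) :
    u r ⟨n, by omega⟩ = -(starRingEnd ℂ) (yV n u r) := by
  by_cases hrn : (r:ℕ) < n
  · have h3 := hrel r ⟨n, by omega⟩
    rw [sign' hn, sigmid r h2 hrn] at h3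
    rw [yV, if_pos ⟨h2, by omega⟩]
    linear_combination h3
  · have hy : yV n u r = 0 := by rw [yV, if_neg (by omega)]
    rw [hy]
    rcases (by omega : (r:ℕ) = n ∨ (r:ℕ) = n+1) with h | h
    · have : r = ⟨n, by omega⟩ := Fin.ext h
      rw [this, urow_n hn htri hrel hphi]; simp
    · have : r = ⟨n+1, by omega⟩ := Fin.ext h
      rw [this, urow_n1 htri]; simp

lemma u_rn1 (hn : 2 ≤ n)
    (htri : ∀ i j : Fin (n+2), (j:ℕ) ≤ (i:ℕ) → u i j = 0)
    (hrel : ∀ i j, (starRingEnd ℂ) (u (sig n j) i) + u (sig n i) j = 0)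
    (hphi : u ⟨0, by omega⟩ ⟨1, by omega⟩ = 0)
    (r : Fin (n+2)) (h2 : 2 ≤ (r:ℕ)) :
    u r ⟨n+1, by omega⟩ = -(starRingEnd ℂ) (xV n u r) := by
  by_cases hrn : (r:ℕ) < n
  · have h3 := hrel r ⟨n+1, by omega⟩
    rw [sign1 hn, sigmid r h2 hrn] at h3
    rw [xV, if_pos ⟨h2, by omega⟩]
    linear_combination h3
  · have hy : xV n u r = 0 := by rw [xV, if_neg (by omega)]
    rw [hy]
    rcases (by omega : (r:ℕ) = n ∨ (r:ℕ) = n+1) with h | h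
    · have : r = ⟨n, by omega⟩ := Fin.ext h
      rw [this, urow_n hn htri hrel hphi]; simp
    · have : r = ⟨n+1, by omega⟩ := Fin.ext h
      rw [this, urow_n1 htri]; simp

lemma u_1n1 (hn : 2 ≤ n)
    (hrel : ∀ i j, (starRingEnd ℂ) (u (sig n j) i) + u (sig n i) j = 0) :
    u ⟨1, by omega⟩ ⟨n+1, by omega⟩ = -(starRingEnd ℂ) (etaC n u) := by
  have h3 := hrel ⟨n, by omega⟩ ⟨n+1, by omega⟩
  rw [sign' hn, sign1 hn] at h3
  have h4 : etaC n u = u ⟨0, by omega⟩ ⟨n, by omega⟩ := rfl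
  rw [h4]
  linear_combination h3

lemma u_1n (hn : 2 ≤ n)
    (hrel : ∀ i j, (starRingEnd ℂ) (u (sig n j) i) + u (sig n i) j = 0) :
    u ⟨1, by omega⟩ ⟨n, by omega⟩ = (syR n u : ℂ) * Complex.I := by
  have h3 := hrel ⟨n, by omega⟩ ⟨n, by omega⟩
  rw [sign' hn] at h3
  have key : ∀ z : ℂ, (starRingEnd ℂ) z + z = 0 → z = (z.im : ℝ) * Complex.I := by
    intro z hz
    have h5 := congrArg Complex.re hz
    simp [Complex.conj_re] at h5
    apply Complex.ext
    · simpa using by linarith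
    · simp
  exact key _ h3

lemma u_0n1 (hn : 2 ≤ n)
    (hrel : ∀ i j, (starRingEnd ℂ) (u (sig n j) i) + u (sig n i) j = 0) :
    u ⟨0, by omega⟩ ⟨n+1, by omega⟩ = (sxR n u : ℂ) * Complex.I := by
  have h3 := hrel ⟨n+1, by omega⟩ ⟨n+1, by omega⟩
  rw [sign1 hn] at h3
  have key : ∀ z : ℂ, (starRingEnd ℂ) z + z = 0 → z = (z.im : ℝ) * Complex.I := by
    intro z hz
    have h5 := congrArg Complex.re hz
    simp [Complex.conj_re] at h5
    apply Complex.ext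
    · simpa using by linarith
    · simp
  exact key _ h3

lemma urow0 (htri : ∀ i j : Fin (n+2), (j:ℕ) ≤ (i:ℕ) → u i j = 0)
    (hphi : u ⟨0, by omega⟩ ⟨1, by omega⟩ = 0)
    (j : Fin (n+2)) (hj : (j:ℕ) < n) :
    u ⟨0, by omega⟩ j = xV n u j := by
  by_cases h2 : 2 ≤ (j:ℕ)
  · rw [xV, if_pos ⟨h2, by omega⟩]
  · rw [xV, if_neg (by omega)]
    rcases (by omega : (j:ℕ) = 0 ∨ (j:ℕ) = 1) with h | h
    · have : j = ⟨0, by omega⟩ := Fin.ext h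
      rw [this]; exact ucol0 htri _
    · have : j = ⟨1, by omega⟩ := Fin.ext h
      rw [this]; exact hphi

lemma urow1 (htri : ∀ i j : Fin (n+2), (j:ℕ) ≤ (i:ℕ) → u i j = 0)
    (hphi : u ⟨0, by omega⟩ ⟨1, by omega⟩ = 0)
    (j : Fin (n+2)) (hj : (j:ℕ) < n) :
    u ⟨1, by omega⟩ j = yV n u j := by
  by_cases h2 : 2 ≤ (j:ℕ)
  · rw [yV, if_pos ⟨h2, by omega⟩]
  · rw [yV, if_neg (by omega)]
    rcases (by omega : (j:ℕ) = 0 ∨ (j:ℕ) = 1) with h | h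
    · have : j = ⟨0, by omega⟩ := Fin.ext h
      rw [this]; exact ucol0 htri _
    · have : j = ⟨1, by omega⟩ := Fin.ext h
      rw [this]; exact ucol1 htri hphi _

end U

section W
variable {n : ℕ} {u : Matrix (Fin (n+2)) (Fin (n+2)) ℂ}

lemma wrow (hn : 2 ≤ n)
    (htri : ∀ i j : Fin (n+2), (j:ℕ) ≤ (i:ℕ) → u i j = 0)
    (hrel : ∀ i j, (starRingEnd ℂ) (u (sig n j) i) + u (sig n i) j = 0)
    (hphi : u ⟨0, by omega⟩ ⟨1, by omega⟩ = 0)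
    (i j : Fin (n+2)) (h2 : 2 ≤ (i:ℕ)) : (u * u) i j = 0 := by
  rw [Matrix.mul_apply]
  apply Finset.sum_eq_zero
  intro k _
  by_cases hk : (k:ℕ) < n
  · rw [umid0 hn htri hrel i k h2 hk, zero_mul]
  · rcases (by have := k.isLt; omega : (k:ℕ) = n ∨ (k:ℕ) = n+1) with h | h
    · rw [(Fin.ext h : k = ⟨n, by omega⟩), urow_n hn htri hrel hphi, mul_zero]
    · rw [(Fin.ext h : k = ⟨n+1, by omega⟩), urow_n1 htri, mul_zero]

lemma wcol (hn : 2 ≤ n)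
    (htri : ∀ i j : Fin (n+2), (j:ℕ) ≤ (i:ℕ) → u i j = 0)
    (hrel : ∀ i j, (starRingEnd ℂ) (u (sig n j) i) + u (sig n i) j = 0)
    (hphi : u ⟨0, by omega⟩ ⟨1, by omega⟩ = 0)
    (i j : Fin (n+2)) (hj : (j:ℕ) < n) : (u * u) i j = 0 := by
  rw [Matrix.mul_apply]
  apply Finset.sum_eq_zero
  intro k _
  by_cases hk : 2 ≤ (k:ℕ)
  · rw [umid0 hn htri hrel k j hk hj, mul_zero]
  · rcases (by omega : (k:ℕ) = 0 ∨ (k:ℕ) = 1) with h | h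
    · rw [(Fin.ext h : k = ⟨0, by omega⟩), ucol0 htri, zero_mul]
    · rw [(Fin.ext h : k = ⟨1, by omega⟩), ucol1 htri hphi, zero_mul]

lemma w0n (hn : 2 ≤ n)
    (htri : ∀ i j : Fin (n+2), (j:ℕ) ≤ (i:ℕ) → u i j = 0)
    (hrel : ∀ i j, (starRingEnd ℂ) (u (sig n j) i) + u (sig n i) j = 0)
    (hphi : u ⟨0, by omega⟩ ⟨1, by omega⟩ = 0) :
    (u * u) ⟨0, by omega⟩ ⟨n, by omega⟩ = -dotC n (xV n u) (yV n u) := by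
  rw [Matrix.mul_apply, dotC, ← Finset.sum_neg_distrib]
  apply Finset.sum_congr rfl
  intro k _
  by_cases hk2 : 2 ≤ (k:ℕ)
  · by_cases hkn : (k:ℕ) < n
    · rw [urow0 htri hphi k hkn, u_rn hn htri hrel hphi k hk2]; ring
    · have hx : xV n u k = 0 := by rw [xV, if_neg (by omega)]
      rcases (by have := k.isLt; omega : (k:ℕ) = n ∨ (k:ℕ) = n+1) with h | h
      · rw [(Fin.ext h : k = ⟨n, by omega⟩)] at hx ⊢
        rw [urow_n hn htri hrel hphi, mul_zero, hx]; simp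
      · rw [(Fin.ext h : k = ⟨n+1, by omega⟩)] at hx ⊢
        rw [urow_n1 htri, mul_zero, hx]; simp
  · have hx : xV n u k = 0 := by rw [xV, if_neg (by omega)]
    rcases (by omega : (k:ℕ) = 0 ∨ (k:ℕ) = 1) with h | h
    · rw [(Fin.ext h : k = ⟨0, by omega⟩)] at hx ⊢
      rw [ucol0 htri, zero_mul, hx]; simp
    · rw [(Fin.ext h : k = ⟨1, by omega⟩)] at hx ⊢
      rw [ucol1 htri hphi, zero_mul, hx]; simp

lemma w0n1 (hn : 2 ≤ n)
    (htri : ∀ i j : Fin (n+2), (j:ℕ) ≤ (i:ℕ) → u i j = 0)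
    (hrel : ∀ i j, (starRingEnd ℂ) (u (sig n j) i) + u (sig n i) j = 0)
    (hphi : u ⟨0, by omega⟩ ⟨1, by omega⟩ = 0) :
    (u * u) ⟨0, by omega⟩ ⟨n+1, by omega⟩ = -dotC n (xV n u) (xV n u) := by
  rw [Matrix.mul_apply, dotC, ← Finset.sum_neg_distrib]
  apply Finset.sum_congr rfl
  intro k _
  by_cases hk2 : 2 ≤ (k:ℕ)
  · by_cases hkn : (k:ℕ) < n
    · rw [urow0 htri hphi k hkn, u_rn1 hn htri hrel hphi k hk2]; ring
    · have hx : xV n u k = 0 := by rw [xV, if_neg (by omega)]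
      rcases (by have := k.isLt; omega : (k:ℕ) = n ∨ (k:ℕ) = n+1) with h | h
      · rw [(Fin.ext h : k = ⟨n, by omega⟩)] at hx ⊢
        rw [urow_n hn htri hrel hphi, mul_zero, hx]; simp
      · rw [(Fin.ext h : k = ⟨n+1, by omega⟩)] at hx ⊢
        rw [urow_n1 htri, mul_zero, hx]; simp
  · have hx : xV n u k = 0 := by rw [xV, if_neg (by omega)]
    rcases (by omega : (k:ℕ) = 0 ∨ (k:ℕ) = 1) with h | h
    · rw [(Fin.ext h : k = ⟨0, by omega⟩)] at hx ⊢
      rw [ucol0 htri, zero_mul, hx]; simp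
    · rw [(Fin.ext h : k = ⟨1, by omega⟩)] at hx ⊢
      rw [ucol1 htri hphi, zero_mul, hx]; simp

lemma w1n (hn : 2 ≤ n)
    (htri : ∀ i j : Fin (n+2), (j:ℕ) ≤ (i:ℕ) → u i j = 0)
    (hrel : ∀ i j, (starRingEnd ℂ) (u (sig n j) i) + u (sig n i) j = 0)
    (hphi : u ⟨0, by omega⟩ ⟨1, by omega⟩ = 0) :
    (u * u) ⟨1, by omega⟩ ⟨n, by omega⟩ = -dotC n (yV n u) (yV n u) := by
  rw [Matrix.mul_apply, dotC, ← Finset.sum_neg_distrib]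
  apply Finset.sum_congr rfl
  intro k _
  by_cases hk2 : 2 ≤ (k:ℕ)
  · by_cases hkn : (k:ℕ) < n
    · rw [urow1 htri hphi k hkn, u_rn hn htri hrel hphi k hk2]; ring
    · have hx : yV n u k = 0 := by rw [yV, if_neg (by omega)]
      rcases (by have := k.isLt; omega : (k:ℕ) = n ∨ (k:ℕ) = n+1) with h | h
      · rw [(Fin.ext h : k = ⟨n, by omega⟩)] at hx ⊢
        rw [urow_n hn htri hrel hphi, mul_zero, hx]; simp
      · rw [(Fin.ext h : k = ⟨n+1, by omega⟩)] at hx ⊢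
        rw [urow_n1 htri, mul_zero, hx]; simp
  · have hx : yV n u k = 0 := by rw [yV, if_neg (by omega)]
    rcases (by omega : (k:ℕ) = 0 ∨ (k:ℕ) = 1) with h | h
    · rw [(Fin.ext h : k = ⟨0, by omega⟩)] at hx ⊢
      rw [ucol0 htri, zero_mul, hx]; simp
    · rw [(Fin.ext h : k = ⟨1, by omega⟩)] at hx ⊢
      rw [ucol1 htri hphi, zero_mul, hx]; simp

lemma w1n1 (hn : 2 ≤ n)
    (htri : ∀ i j : Fin (n+2), (j:ℕ) ≤ (i:ℕ) → u i j = 0)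
    (hrel : ∀ i j, (starRingEnd ℂ) (u (sig n j) i) + u (sig n i) j = 0)
    (hphi : u ⟨0, by omega⟩ ⟨1, by omega⟩ = 0) :
    (u * u) ⟨1, by omega⟩ ⟨n+1, by omega⟩ = -(starRingEnd ℂ) (dotC n (xV n u) (yV n u)) := by
  have hconj : (starRingEnd ℂ) (dotC n (xV n u) (yV n u))
      = ∑ k, yV n u k * (starRingEnd ℂ) (xV n u k) := by
    rw [dotC, map_sum]
    apply Finset.sum_congr rfl
    intro k _
    rw [map_mul, Complex.conj_conj]; ring
  rw [Matrix.mul_apply, hconj, ← Finset.sum_neg_distrib]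
  apply Finset.sum_congr rfl
  intro k _
  by_cases hk2 : 2 ≤ (k:ℕ)
  · by_cases hkn : (k:ℕ) < n
    · rw [urow1 htri hphi k hkn, u_rn1 hn htri hrel hphi k hk2]; ring
    · have hx : yV n u k = 0 := by rw [yV, if_neg (by omega)]
      rcases (by have := k.isLt; omega : (k:ℕ) = n ∨ (k:ℕ) = n+1) with h | h
      · rw [(Fin.ext h : k = ⟨n, by omega⟩)] at hx ⊢
        rw [urow_n hn htri hrel hphi, mul_zero, hx]; simp
      · rw [(Fin.ext h : k = ⟨n+1, by omega⟩)] at hx ⊢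
        rw [urow_n1 htri, mul_zero, hx]; simp
  · have hx : yV n u k = 0 := by rw [yV, if_neg (by omega)]
    rcases (by omega : (k:ℕ) = 0 ∨ (k:ℕ) = 1) with h | h
    · rw [(Fin.ext h : k = ⟨0, by omega⟩)] at hx ⊢
      rw [ucol0 htri, zero_mul, hx]; simp
    · rw [(Fin.ext h : k = ⟨1, by omega⟩)] at hx ⊢
      rw [ucol1 htri hphi, zero_mul, hx]; simp

end W

section P
variable {n : ℕ} {x y v : Fin (n+2) → ℂ} {a b : ℂ}

lemma dot_eq (hx : ∀ k, x k = a * v k) (hy : ∀ k, y k = b * v k) :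
    dotC n x y = a * (starRingEnd ℂ) b * dotC n v v := by
  rw [dotC, dotC, Finset.mul_sum]
  apply Finset.sum_congr rfl
  intro k _
  rw [hx k, hy k, map_mul]; ring

lemma dot_self_conj (v : Fin (n+2) → ℂ) :
    (starRingEnd ℂ) (dotC n v v) = dotC n v v := by
  rw [dotC, map_sum]
  apply Finset.sum_congr rfl
  intro k _
  rw [map_mul, Complex.conj_conj]; ring

lemma pP1 (hx : ∀ k, x k = a * v k) (hy : ∀ k, y k = b * v k) (r : Fin (n+2)) :
    dotC n x y * (starRingEnd ℂ) (x r) = dotC n x x * (starRingEnd ℂ) (y r) := by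
  rw [dot_eq hx hy, dot_eq hx hx, hx r, hy r, map_mul, map_mul]; ring

lemma pP2 (hx : ∀ k, x k = a * v k) (hy : ∀ k, y k = b * v k) (r : Fin (n+2)) :
    dotC n y y * (starRingEnd ℂ) (x r)
      = (starRingEnd ℂ) (dotC n x y) * (starRingEnd ℂ) (y r) := by
  rw [dot_eq hy hy, dot_eq hx hy, map_mul, map_mul, Complex.conj_conj, dot_self_conj,
    hx r, hy r, map_mul, map_mul]; ring

lemma pP3 (hx : ∀ k, x k = a * v k) (hy : ∀ k, y k = b * v k) (s : Fin (n+2)) :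
    dotC n y y * x s = dotC n x y * y s := by
  rw [dot_eq hy hy, dot_eq hx hy, hx s, hy s]; ring

lemma pP4 (hx : ∀ k, x k = a * v k) (hy : ∀ k, y k = b * v k) (s : Fin (n+2)) :
    dotC n x x * y s = (starRingEnd ℂ) (dotC n x y) * x s := by
  rw [dot_eq hx hx, dot_eq hx hy, map_mul, map_mul, Complex.conj_conj, dot_self_conj,
    hx s, hy s]; ring

lemma pP5 (hx : ∀ k, x k = a * v k) (hy : ∀ k, y k = b * v k) :
    dotC n x y * (starRingEnd ℂ) (dotC n x y) = dotC n x x * dotC n y y := by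
  rw [dot_eq hx hy, dot_eq hx hx, dot_eq hy hy, map_mul, map_mul, Complex.conj_conj,
    dot_self_conj]; ring

end P

section F
variable {n : ℕ} {u : Matrix (Fin (n+2)) (Fin (n+2)) ℂ}

lemma factF1 (hn : 2 ≤ n)
    (htri : ∀ i j : Fin (n+2), (j:ℕ) ≤ (i:ℕ) → u i j = 0)
    (hrel : ∀ i j, (starRingEnd ℂ) (u (sig n j) i) + u (sig n i) j = 0)
    (hphi : u ⟨0, by omega⟩ ⟨1, by omega⟩ = 0)
    (P5 : dotC n (xV n u) (yV n u) * (starRingEnd ℂ) (dotC n (xV n u) (yV n u))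
        = dotC n (xV n u) (xV n u) * dotC n (yV n u) (yV n u))
    (i r j s : Fin (n+2)) :
    (u*u) i j * (u*u) r s - (u*u) i s * (u*u) r j = 0 := by
  by_cases hi : 2 ≤ (i:ℕ)
  · rw [wrow hn htri hrel hphi i j hi, wrow hn htri hrel hphi i s hi]; ring
  by_cases hr : 2 ≤ (r:ℕ)
  · rw [wrow hn htri hrel hphi r s hr, wrow hn htri hrel hphi r j hr]; ring
  by_cases hj : n ≤ (j:ℕ)
  swap
  · rw [wcol hn htri hrel hphi i j (by omega), wcol hn htri hrel hphi r j (by omega)]; ring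
  by_cases hs : n ≤ (s:ℕ)
  swap
  · rw [wcol hn htri hrel hphi i s (by omega), wcol hn htri hrel hphi r s (by omega)]; ring
  by_cases hjs : j = s
  · rw [hjs]; ring
  by_cases hir : i = r
  · rw [hir]; ring
  have hcol : ((j:ℕ) = n ∧ (s:ℕ) = n+1) ∨ ((j:ℕ) = n+1 ∧ (s:ℕ) = n) := by
    have := j.isLt; have := s.isLt
    have hne : (j:ℕ) ≠ (s:ℕ) := fun hh => hjs (Fin.ext hh)
    omega
  have hrow : ((i:ℕ) = 0 ∧ (r:ℕ) = 1) ∨ ((i:ℕ) = 1 ∧ (r:ℕ) = 0) := by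
    have hne : (i:ℕ) ≠ (r:ℕ) := fun hh => hir (Fin.ext hh)
    omega
  rcases hrow with ⟨h1, h2⟩ | ⟨h1, h2⟩ <;> rcases hcol with ⟨h3, h4⟩ | ⟨h3, h4⟩
  · rw [(Fin.ext h1 : i = ⟨0, Nat.succ_pos _⟩), (Fin.ext h2 : r = ⟨1, Nat.succ_lt_succ (Nat.succ_pos _)⟩),
      (Fin.ext h3 : j = ⟨n, lt_add_of_pos_right n two_pos⟩), (Fin.ext h4 : s = ⟨n+1, Nat.lt_succ_self _⟩),
      w0n hn htri hrel hphi, w0n1 hn htri hrel hphi, w1n hn htri hrel hphi,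
      w1n1 hn htri hrel hphi]
    linear_combination P5
  · rw [(Fin.ext h1 : i = ⟨0, Nat.succ_pos _⟩), (Fin.ext h2 : r = ⟨1, Nat.succ_lt_succ (Nat.succ_pos _)⟩),
      (Fin.ext h3 : j = ⟨n+1, Nat.lt_succ_self _⟩), (Fin.ext h4 : s = ⟨n, lt_add_of_pos_right n two_pos⟩),
      w0n hn htri hrel hphi, w0n1 hn htri hrel hphi, w1n hn htri hrel hphi,
      w1n1 hn htri hrel hphi]
    linear_combination -P5
  · rw [(Fin.ext h1 : i = ⟨1, Nat.succ_lt_succ (Nat.succ_pos _)⟩), (Fin.ext h2 : r = ⟨0, Nat.succ_pos _⟩),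
      (Fin.ext h3 : j = ⟨n, lt_add_of_pos_right n two_pos⟩), (Fin.ext h4 : s = ⟨n+1, Nat.lt_succ_self _⟩),
      w0n hn htri hrel hphi, w0n1 hn htri hrel hphi, w1n hn htri hrel hphi,
      w1n1 hn htri hrel hphi]
    linear_combination -P5
  · rw [(Fin.ext h1 : i = ⟨1, Nat.succ_lt_succ (Nat.succ_pos _)⟩), (Fin.ext h2 : r = ⟨0, Nat.succ_pos _⟩),
      (Fin.ext h3 : j = ⟨n+1, Nat.lt_succ_self _⟩), (Fin.ext h4 : s = ⟨n, lt_add_of_pos_right n two_pos⟩),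
      w0n hn htri hrel hphi, w0n1 hn htri hrel hphi, w1n hn htri hrel hphi,
      w1n1 hn htri hrel hphi]
    linear_combination P5

end F

section F2
variable {n : ℕ} {u : Matrix (Fin (n+2)) (Fin (n+2)) ℂ}

lemma factF2 (hn : 2 ≤ n)
    (htri : ∀ i j : Fin (n+2), (j:ℕ) ≤ (i:ℕ) → u i j = 0)
    (hrel : ∀ i j, (starRingEnd ℂ) (u (sig n j) i) + u (sig n i) j = 0)
    (hphi : u ⟨0, by omega⟩ ⟨1, by omega⟩ = 0)
    (P1 : ∀ r, dotC n (xV n u) (yV n u) * (starRingEnd ℂ) (xV n u r)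
        = dotC n (xV n u) (xV n u) * (starRingEnd ℂ) (yV n u r))
    (P2 : ∀ r, dotC n (yV n u) (yV n u) * (starRingEnd ℂ) (xV n u r)
        = (starRingEnd ℂ) (dotC n (xV n u) (yV n u)) * (starRingEnd ℂ) (yV n u r))
    (P3 : ∀ s, dotC n (yV n u) (yV n u) * xV n u s = dotC n (xV n u) (yV n u) * yV n u s)
    (P4 : ∀ s, dotC n (xV n u) (xV n u) * yV n u s
        = (starRingEnd ℂ) (dotC n (xV n u) (yV n u)) * xV n u s)
    (hQ : (u*u) ⟨0, Nat.succ_pos _⟩ ⟨n, lt_add_of_pos_right n two_pos⟩ * u ⟨1, Nat.succ_lt_succ (Nat.succ_pos _)⟩ ⟨n+1, Nat.lt_succ_self _⟩ - (u*u) ⟨0, Nat.succ_pos _⟩ ⟨n+1, Nat.lt_succ_self _⟩ * u ⟨1, Nat.succ_lt_succ (Nat.succ_pos _)⟩ ⟨n, lt_add_of_pos_right n two_pos⟩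
        + u ⟨0, Nat.succ_pos _⟩ ⟨n, lt_add_of_pos_right n two_pos⟩ * (u*u) ⟨1, Nat.succ_lt_succ (Nat.succ_pos _)⟩ ⟨n+1, Nat.lt_succ_self _⟩ - u ⟨0, Nat.succ_pos _⟩ ⟨n+1, Nat.lt_succ_self _⟩ * (u*u) ⟨1, Nat.succ_lt_succ (Nat.succ_pos _)⟩ ⟨n, lt_add_of_pos_right n two_pos⟩ = 0)
    (i r j s : Fin (n+2)) :
    (u*u) i j * u r s - (u*u) i s * u r j + u i j * (u*u) r s - u i s * (u*u) r j = 0 := by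
  have key1 : ∀ (i r j s : Fin (n+2)), (i:ℕ) ≤ 1 → 2 ≤ (r:ℕ) →
      (u*u) i j * u r s - (u*u) i s * u r j + u i j * (u*u) r s - u i s * (u*u) r j = 0 := by
    intro i r j s hi hr
    rw [wrow hn htri hrel hphi r s hr, wrow hn htri hrel hphi r j hr]
    by_cases hj : n ≤ (j:ℕ)
    · by_cases hs : n ≤ (s:ℕ)
      · by_cases hjs : j = s
        · rw [hjs]; ring
        · have hcol : ((j:ℕ) = n ∧ (s:ℕ) = n+1) ∨ ((j:ℕ) = n+1 ∧ (s:ℕ) = n) := by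
            have := j.isLt; have := s.isLt
            have hne : (j:ℕ) ≠ (s:ℕ) := fun hh => hjs (Fin.ext hh)
            omega
          have hi' : (i:ℕ) = 0 ∨ (i:ℕ) = 1 := by omega
          rcases hi' with h1 | h1
          · rcases hcol with ⟨h3, h4⟩ | ⟨h3, h4⟩
            · rw [(Fin.ext h1 : i = ⟨0, Nat.succ_pos _⟩), (Fin.ext h3 : j = ⟨n, lt_add_of_pos_right n two_pos⟩), (Fin.ext h4 : s = ⟨n+1, Nat.lt_succ_self _⟩),
                w0n hn htri hrel hphi, w0n1 hn htri hrel hphi, u_rn hn htri hrel hphi r hr, u_rn1 hn htri hrel hphi r hr]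
              linear_combination P1 r
            · rw [(Fin.ext h1 : i = ⟨0, Nat.succ_pos _⟩), (Fin.ext h3 : j = ⟨n+1, Nat.lt_succ_self _⟩), (Fin.ext h4 : s = ⟨n, lt_add_of_pos_right n two_pos⟩),
                w0n hn htri hrel hphi, w0n1 hn htri hrel hphi, u_rn hn htri hrel hphi r hr, u_rn1 hn htri hrel hphi r hr]
              linear_combination -(P1 r)
          · rcases hcol with ⟨h3, h4⟩ | ⟨h3, h4⟩
            · rw [(Fin.ext h1 : i = ⟨1, Nat.succ_lt_succ (Nat.succ_pos _)⟩), (Fin.ext h3 : j = ⟨n, lt_add_of_pos_right n two_pos⟩), (Fin.ext h4 : s = ⟨n+1, Nat.lt_succ_self _⟩),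
                w1n hn htri hrel hphi, w1n1 hn htri hrel hphi, u_rn hn htri hrel hphi r hr, u_rn1 hn htri hrel hphi r hr]
              linear_combination P2 r
            · rw [(Fin.ext h1 : i = ⟨1, Nat.succ_lt_succ (Nat.succ_pos _)⟩), (Fin.ext h3 : j = ⟨n+1, Nat.lt_succ_self _⟩), (Fin.ext h4 : s = ⟨n, lt_add_of_pos_right n two_pos⟩),
                w1n hn htri hrel hphi, w1n1 hn htri hrel hphi, u_rn hn htri hrel hphi r hr, u_rn1 hn htri hrel hphi r hr]
              linear_combination -(P2 r)
      · rw [wcol hn htri hrel hphi i s (by omega), umid0 hn htri hrel r s hr (by omega)]; ring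
    · by_cases hs : n ≤ (s:ℕ)
      · rw [wcol hn htri hrel hphi i j (by omega), umid0 hn htri hrel r j hr (by omega)]; ring
      · rw [wcol hn htri hrel hphi i j (by omega), wcol hn htri hrel hphi i s (by omega)]; ring
  have key2 : ∀ (j s : Fin (n+2)), n ≤ (j:ℕ) → (s:ℕ) < n →
      (u*u) ⟨0, Nat.succ_pos _⟩ j * u ⟨1, Nat.succ_lt_succ (Nat.succ_pos _)⟩ s - (u*u) ⟨0, Nat.succ_pos _⟩ s * u ⟨1, Nat.succ_lt_succ (Nat.succ_pos _)⟩ j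
        + u ⟨0, Nat.succ_pos _⟩ j * (u*u) ⟨1, Nat.succ_lt_succ (Nat.succ_pos _)⟩ s - u ⟨0, Nat.succ_pos _⟩ s * (u*u) ⟨1, Nat.succ_lt_succ (Nat.succ_pos _)⟩ j = 0 := by
    intro j s hj hs
    rw [wcol hn htri hrel hphi ⟨0, Nat.succ_pos _⟩ s hs, wcol hn htri hrel hphi ⟨1, Nat.succ_lt_succ (Nat.succ_pos _)⟩ s hs, urow1 htri hphi s hs, urow0 htri hphi s hs]
    rcases (by have := j.isLt; omega : (j:ℕ) = n ∨ (j:ℕ) = n+1) with h3 | h3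
    · rw [(Fin.ext h3 : j = ⟨n, lt_add_of_pos_right n two_pos⟩), w0n hn htri hrel hphi, w1n hn htri hrel hphi]
      linear_combination P3 s
    · rw [(Fin.ext h3 : j = ⟨n+1, Nat.lt_succ_self _⟩), w0n1 hn htri hrel hphi, w1n1 hn htri hrel hphi]
      linear_combination -(P4 s)
  by_cases hi : (i:ℕ) ≤ 1
  · by_cases hr : (r:ℕ) ≤ 1
    · by_cases hir : i = r
      · rw [hir]; ring
      · have hD : ∀ (j' s' : Fin (n+2)),
            (u*u) ⟨0, Nat.succ_pos _⟩ j' * u ⟨1, Nat.succ_lt_succ (Nat.succ_pos _)⟩ s' - (u*u) ⟨0, Nat.succ_pos _⟩ s' * u ⟨1, Nat.succ_lt_succ (Nat.succ_pos _)⟩ j'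
              + u ⟨0, Nat.succ_pos _⟩ j' * (u*u) ⟨1, Nat.succ_lt_succ (Nat.succ_pos _)⟩ s' - u ⟨0, Nat.succ_pos _⟩ s' * (u*u) ⟨1, Nat.succ_lt_succ (Nat.succ_pos _)⟩ j' = 0 := by
          intro j' s'
          by_cases hj : n ≤ (j':ℕ)
          · by_cases hs : n ≤ (s':ℕ)
            · by_cases hjs : j' = s'
              · rw [hjs]; ring
              · have hcol : ((j':ℕ) = n ∧ (s':ℕ) = n+1) ∨ ((j':ℕ) = n+1 ∧ (s':ℕ) = n) := by
                  have := j'.isLt; have := s'.isLt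
                  have hne : (j':ℕ) ≠ (s':ℕ) := fun hh => hjs (Fin.ext hh)
                  omega
                rcases hcol with ⟨h3, h4⟩ | ⟨h3, h4⟩
                · rw [(Fin.ext h3 : j' = ⟨n, lt_add_of_pos_right n two_pos⟩), (Fin.ext h4 : s' = ⟨n+1, Nat.lt_succ_self _⟩)]; exact hQ
                · rw [(Fin.ext h3 : j' = ⟨n+1, Nat.lt_succ_self _⟩), (Fin.ext h4 : s' = ⟨n, lt_add_of_pos_right n two_pos⟩)]
                  linear_combination -hQ
            · exact key2 j' s' hj (by omega)
          · by_cases hs : n ≤ (s':ℕ)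
            · have hk := key2 s' j' hs (by omega)
              linear_combination -hk
            · rw [wcol hn htri hrel hphi ⟨0, Nat.succ_pos _⟩ j' (by omega), wcol hn htri hrel hphi ⟨0, Nat.succ_pos _⟩ s' (by omega),
                wcol hn htri hrel hphi ⟨1, Nat.succ_lt_succ (Nat.succ_pos _)⟩ j' (by omega), wcol hn htri hrel hphi ⟨1, Nat.succ_lt_succ (Nat.succ_pos _)⟩ s' (by omega)]; ring
        rcases (by omega : (i:ℕ) = 0 ∨ (i:ℕ) = 1) with h1 | h1 <;>
          rcases (by omega : (r:ℕ) = 0 ∨ (r:ℕ) = 1) with h2 | h2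
        · exact absurd (Fin.ext (h1.trans h2.symm)) hir
        · rw [(Fin.ext h1 : i = ⟨0, Nat.succ_pos _⟩), (Fin.ext h2 : r = ⟨1, Nat.succ_lt_succ (Nat.succ_pos _)⟩)]; exact hD j s
        · rw [(Fin.ext h1 : i = ⟨1, Nat.succ_lt_succ (Nat.succ_pos _)⟩), (Fin.ext h2 : r = ⟨0, Nat.succ_pos _⟩)]
          linear_combination -(hD j s)
        · exact absurd (Fin.ext (h1.trans h2.symm)) hir
    · exact key1 i r j s hi (by omega)
  · by_cases hr : (r:ℕ) ≤ 1
    · have hk := key1 r i j s hr (by omega)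
      linear_combination -hk
    · rw [wrow hn htri hrel hphi i j (by omega), wrow hn htri hrel hphi i s (by omega),
        wrow hn htri hrel hphi r s (by omega), wrow hn htri hrel hphi r j (by omega)]; ring

end F2

section E
variable {n : ℕ} {u : Matrix (Fin (n+2)) (Fin (n+2)) ℂ}

lemma ucube (hn : 2 ≤ n)
    (htri : ∀ i j : Fin (n+2), (j:ℕ) ≤ (i:ℕ) → u i j = 0)
    (hrel : ∀ i j, (starRingEnd ℂ) (u (sig n j) i) + u (sig n i) j = 0)
    (hphi : u ⟨0, by omega⟩ ⟨1, by omega⟩ = 0) :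
    u * u * u = 0 := by
  ext i j
  rw [Matrix.mul_apply, Matrix.zero_apply]
  apply Finset.sum_eq_zero
  intro k _
  by_cases hk : (k:ℕ) < n
  · rw [wcol hn htri hrel hphi i k hk, zero_mul]
  · rcases (by have := k.isLt; omega : (k:ℕ) = n ∨ (k:ℕ) = n+1) with h | h
    · rw [(Fin.ext h : k = ⟨n, lt_add_of_pos_right n two_pos⟩), urow_n hn htri hrel hphi,
        mul_zero]
    · rw [(Fin.ext h : k = ⟨n+1, Nat.lt_succ_self _⟩), urow_n1 htri, mul_zero]

lemma real_smul_mat (t : ℝ) (A : Matrix (Fin (n+2)) (Fin (n+2)) ℂ) :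
    t • A = (t:ℂ) • A := by
  rw [← algebraMap_smul ℂ t A, Complex.coe_algebraMap]

lemma exp_formula (hn : 2 ≤ n)
    (htri : ∀ i j : Fin (n+2), (j:ℕ) ≤ (i:ℕ) → u i j = 0)
    (hrel : ∀ i j, (starRingEnd ℂ) (u (sig n j) i) + u (sig n i) j = 0)
    (hphi : u ⟨0, by omega⟩ ⟨1, by omega⟩ = 0) (t : ℝ) :
    NormedSpace.exp (t • u) = 1 + (t:ℂ) • u + (((t:ℂ)^2)/2) • (u * u) := by
  rw [NormedSpace.exp_eq_tsum ℂ]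
  have hu3 : u ^ 3 = 0 := by
    rw [pow_succ, pow_two]; exact ucube hn htri hrel hphi
  have hc : (t • u) ^ 3 = 0 := by
    rw [smul_pow, hu3, smul_zero]
  have h3 : ∀ k, 3 ≤ k → (t • u) ^ k = 0 := by
    intro k hk
    have hsplit : (t • u) ^ k = (t • u) ^ 3 * (t • u) ^ (k - 3) := by
      rw [← pow_add]; congr 1; omega
    rw [hsplit, hc, zero_mul]
  show (∑' k : ℕ, ((Nat.factorial k : ℕ)⁻¹ : ℂ) • (t • u) ^ k) = _
  rw [tsum_eq_sum (s := Finset.range 3) (f := fun k : ℕ => ((Nat.factorial k : ℕ)⁻¹ : ℂ) • (t • u) ^ k)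
    (fun k (hk : k ∉ Finset.range 3) => by
      rw [h3 k (by simp only [Finset.mem_range, not_lt] at hk; exact hk), smul_zero])]
  have e0' : ((Nat.factorial 0 : ℕ)⁻¹ : ℂ) • ((t • u) ^ 0) = (1 : Matrix (Fin (n+2)) (Fin (n+2)) ℂ) := by
    simp
  have e1' : ((Nat.factorial 1 : ℕ)⁻¹ : ℂ) • ((t • u) ^ 1) = (t:ℂ) • u := by
    rw [pow_one, real_smul_mat]; simp
  have e2' : ((Nat.factorial 2 : ℕ)⁻¹ : ℂ) • ((t • u) ^ 2) = (((t:ℂ)^2)/2) • (u * u) := by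
    rw [real_smul_mat, smul_pow, smul_smul, (pow_two u)]
    norm_num [Nat.factorial]
    congr 1
    ring
  rw [Finset.sum_range_succ, Finset.sum_range_succ, Finset.sum_range_one, e0', e1', e2']

end E

def hM (n : ℕ) (u : Matrix (Fin (n+2)) (Fin (n+2)) ℂ) (t : ℝ) :
    Matrix (Fin (n+2)) (Fin (n+2)) ℂ :=
  1 + ((t:ℝ):ℂ) • u + ((((t:ℝ):ℂ))^2/2) • (u * u)

section NORM
variable {n : ℕ}

lemma hM_apply (u : Matrix (Fin (n+2)) (Fin (n+2)) ℂ) (t : ℝ) (i j : Fin (n+2)) :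
    hM n u t i j = (if i = j then 1 else 0) + (t:ℂ) * u i j + ((t:ℂ)^2/2) * (u*u) i j := by
  simp [hM, Matrix.add_apply, Matrix.one_apply, Matrix.smul_apply, smul_eq_mul]

lemma abs_entry_le_entryNorm (h : Matrix (Fin (n+2)) (Fin (n+2)) ℂ) (i j : Fin (n+2)) :
    ‖h i j‖ ≤ entryNorm n h := by
  unfold entryNorm
  exact Finset.le_sup' (fun p : Fin (n+2) × Fin (n+2) => ‖h p.1 p.2‖) (Finset.mem_univ ((i, j)))

lemma entryNorm_le (h : Matrix (Fin (n+2)) (Fin (n+2)) ℂ) {B : ℝ}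
    (hB : ∀ i j, ‖h i j‖ ≤ B) : entryNorm n h ≤ B := by
  unfold entryNorm; exact Finset.sup'_le _ _ (fun p _ => hB p.1 p.2)

lemma minor_le_rhoNorm (h : Matrix (Fin (n+2)) (Fin (n+2)) ℂ) (i r j s : Fin (n+2)) :
    ‖h i j * h r s - h i s * h r j‖ ≤ rhoNorm n h := by
  unfold rhoNorm
  exact Finset.le_sup' (fun q : (Fin (n+2) × Fin (n+2)) × Fin (n+2) × Fin (n+2) => ‖h q.1.1 q.2.1 * h q.1.2 q.2.2 - h q.1.1 q.2.2 * h q.1.2 q.2.1‖) (Finset.mem_univ (((i, r), (j, s))))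

lemma rhoNorm_le (h : Matrix (Fin (n+2)) (Fin (n+2)) ℂ) {B : ℝ}
    (hB : ∀ i r j s, ‖h i j * h r s - h i s * h r j‖ ≤ B) : rhoNorm n h ≤ B := by
  unfold rhoNorm; exact Finset.sup'_le _ _ (fun q _ => hB q.1.1 q.1.2 q.2.1 q.2.2)

lemma entryNorm_nonneg (h : Matrix (Fin (n+2)) (Fin (n+2)) ℂ) : 0 ≤ entryNorm n h :=
  le_trans (norm_nonneg _) (abs_entry_le_entryNorm h ⟨0, Nat.succ_pos _⟩ ⟨0, Nat.succ_pos _⟩)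

lemma habs_sub (x y : ℂ) : ‖x - y‖ ≤ ‖x‖ + ‖y‖ := by
  simpa [sub_eq_add_neg] using norm_add_le x (-y)

lemma he_bound (i j : Fin (n+2)) : ‖if i = j then (1:ℂ) else 0‖ ≤ 1 := by
  split_ifs <;> simp

lemma minor_bound {u : Matrix (Fin (n+2)) (Fin (n+2)) ℂ}
    (F1 : ∀ i r j s : Fin (n+2), (u*u) i j * (u*u) r s - (u*u) i s * (u*u) r j = 0)
    (F2 : ∀ i r j s : Fin (n+2),
      (u*u) i j * u r s - (u*u) i s * u r j + u i j * (u*u) r s - u i s * (u*u) r j = 0)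
    (t : ℝ) (ht : 0 ≤ t) (i r j s : Fin (n+2)) :
    ‖hM n u t i j * hM n u t r s - hM n u t i s * hM n u t r j‖
      ≤ 2*(2 + 4*entryNorm n u + 2*(entryNorm n u)^2 + 2*entryNorm n (u*u))*(1+t^2) := by
  set Mu := entryNorm n u with hMu
  set Mw := entryNorm n (u*u) with hMw
  have hMu0 : 0 ≤ Mu := entryNorm_nonneg u
  have hMw0 : 0 ≤ Mw := entryNorm_nonneg (u*u)
  set A : ℂ := (if i = j then (1:ℂ) else 0) * (if r = s then (1:ℂ) else 0)
    - (if i = s then (1:ℂ) else 0) * (if r = j then (1:ℂ) else 0) with hA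
  set B : ℂ := (if i = j then (1:ℂ) else 0) * u r s + u i j * (if r = s then (1:ℂ) else 0)
    - (if i = s then (1:ℂ) else 0) * u r j - u i s * (if r = j then (1:ℂ) else 0) with hB
  set C : ℂ := u i j * u r s - u i s * u r j
    + ((if i = j then (1:ℂ) else 0) * (u*u) r s + (u*u) i j * (if r = s then (1:ℂ) else 0)
      - (if i = s then (1:ℂ) else 0) * (u*u) r j - (u*u) i s * (if r = j then (1:ℂ) else 0))/2
    with hC
  have hid : hM n u t i j * hM n u t r s - hM n u t i s * hM n u t r j
      = A + (t:ℂ) * B + (t:ℂ)^2 * C := by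
    rw [hM_apply, hM_apply, hM_apply, hM_apply, hA, hB, hC]
    linear_combination ((t:ℂ)^3/2) * F2 i r j s + ((t:ℂ)^4/4) * F1 i r j s
  have habsA : ‖A‖ ≤ 2 := by
    calc ‖A‖ ≤ ‖(if i = j then (1:ℂ) else 0) * (if r = s then (1:ℂ) else 0)‖
          + ‖(if i = s then (1:ℂ) else 0) * (if r = j then (1:ℂ) else 0)‖ :=
        habs_sub _ _
      _ ≤ 1 + 1 := by
        rw [norm_mul, norm_mul]
        exact add_le_add
          (mul_le_one₀ (he_bound i j) (norm_nonneg _) (he_bound r s))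
          (mul_le_one₀ (he_bound i s) (norm_nonneg _) (he_bound r j))
      _ = 2 := by norm_num
  have key : ∀ (p q : Fin (n+2)) (a b : Fin (n+2)),
      ‖(if p = q then (1:ℂ) else 0) * u a b‖ ≤ Mu := by
    intro p q a b
    rw [norm_mul]
    calc ‖if p = q then (1:ℂ) else 0‖ * ‖u a b‖
        ≤ 1 * Mu := mul_le_mul (he_bound p q) (abs_entry_le_entryNorm u a b)
          (norm_nonneg _) zero_le_one
      _ = Mu := one_mul _
  have keyw : ∀ (p q : Fin (n+2)) (a b : Fin (n+2)),
      ‖(if p = q then (1:ℂ) else 0) * (u*u) a b‖ ≤ Mw := by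
    intro p q a b
    rw [norm_mul]
    calc ‖if p = q then (1:ℂ) else 0‖ * ‖(u*u) a b‖
        ≤ 1 * Mw := mul_le_mul (he_bound p q) (abs_entry_le_entryNorm (u*u) a b)
          (norm_nonneg _) zero_le_one
      _ = Mw := one_mul _
  have habsB : ‖B‖ ≤ 4*Mu := by
    calc ‖B‖
        ≤ ‖(if i = j then (1:ℂ) else 0) * u r s
            + u i j * (if r = s then (1:ℂ) else 0)
            - (if i = s then (1:ℂ) else 0) * u r j‖
          + ‖u i s * (if r = j then (1:ℂ) else 0)‖ := habs_sub _ _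
      _ ≤ (‖(if i = j then (1:ℂ) else 0) * u r s
            + u i j * (if r = s then (1:ℂ) else 0)‖
          + ‖(if i = s then (1:ℂ) else 0) * u r j‖)
          + ‖u i s * (if r = j then (1:ℂ) else 0)‖ := by
        gcongr
        exact habs_sub _ _
      _ ≤ ((‖(if i = j then (1:ℂ) else 0) * u r s‖
          + ‖u i j * (if r = s then (1:ℂ) else 0)‖)
          + ‖(if i = s then (1:ℂ) else 0) * u r j‖)
          + ‖u i s * (if r = j then (1:ℂ) else 0)‖ := by
        gcongr
        exact norm_add_le _ _
      _ ≤ ((Mu + Mu) + Mu) + Mu := by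
        gcongr
        · exact key i j r s
        · rw [mul_comm]; exact key r s i j
        · exact key i s r j
        · rw [mul_comm]; exact key r j i s
      _ = 4*Mu := by ring
  have habsC : ‖C‖ ≤ 2*Mu^2 + 2*Mw := by
    have huu : ∀ (a b c d : Fin (n+2)), ‖u a b * u c d‖ ≤ Mu^2 := by
      intro a b c d
      rw [norm_mul, pow_two]
      exact mul_le_mul (abs_entry_le_entryNorm u a b) (abs_entry_le_entryNorm u c d)
        (norm_nonneg _) hMu0
    have hwsum : ‖(if i = j then (1:ℂ) else 0) * (u*u) r s
        + (u*u) i j * (if r = s then (1:ℂ) else 0)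
        - (if i = s then (1:ℂ) else 0) * (u*u) r j
        - (u*u) i s * (if r = j then (1:ℂ) else 0)‖ ≤ 4*Mw := by
      calc _ ≤ ‖(if i = j then (1:ℂ) else 0) * (u*u) r s
            + (u*u) i j * (if r = s then (1:ℂ) else 0)
            - (if i = s then (1:ℂ) else 0) * (u*u) r j‖
          + ‖(u*u) i s * (if r = j then (1:ℂ) else 0)‖ := habs_sub _ _
        _ ≤ (‖(if i = j then (1:ℂ) else 0) * (u*u) r s
            + (u*u) i j * (if r = s then (1:ℂ) else 0)‖
            + ‖(if i = s then (1:ℂ) else 0) * (u*u) r j‖)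
          + ‖(u*u) i s * (if r = j then (1:ℂ) else 0)‖ := by
          gcongr; exact habs_sub _ _
        _ ≤ ((‖(if i = j then (1:ℂ) else 0) * (u*u) r s‖
            + ‖(u*u) i j * (if r = s then (1:ℂ) else 0)‖)
            + ‖(if i = s then (1:ℂ) else 0) * (u*u) r j‖)
          + ‖(u*u) i s * (if r = j then (1:ℂ) else 0)‖ := by
          gcongr; exact norm_add_le _ _
        _ ≤ ((Mw + Mw) + Mw) + Mw := by
          gcongr
          · exact keyw i j r s
          · rw [mul_comm]; exact keyw r s i j
          · exact keyw i s r j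
          · rw [mul_comm]; exact keyw r j i s
        _ = 4*Mw := by ring
    calc ‖C‖
        ≤ ‖u i j * u r s - u i s * u r j‖
          + ‖((if i = j then (1:ℂ) else 0) * (u*u) r s
            + (u*u) i j * (if r = s then (1:ℂ) else 0)
            - (if i = s then (1:ℂ) else 0) * (u*u) r j
            - (u*u) i s * (if r = j then (1:ℂ) else 0))/2‖ := norm_add_le _ _
      _ ≤ (‖u i j * u r s‖ + ‖u i s * u r j‖)
          + ‖(if i = j then (1:ℂ) else 0) * (u*u) r s
            + (u*u) i j * (if r = s then (1:ℂ) else 0)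
            - (if i = s then (1:ℂ) else 0) * (u*u) r j
            - (u*u) i s * (if r = j then (1:ℂ) else 0)‖/2 := by
          rw [norm_div]
          gcongr
          · exact habs_sub _ _
          · simp
      _ ≤ (Mu^2 + Mu^2) + (4*Mw)/2 := by
          gcongr
          · exact huu i j r s
          · exact huu i s r j
      _ = 2*Mu^2 + 2*Mw := by ring
  rw [hid]
  have htr : ‖A + (t:ℂ) * B + (t:ℂ)^2 * C‖
      ≤ ‖A‖ + t * ‖B‖ + t^2 * ‖C‖ := by
    calc ‖A + (t:ℂ) * B + (t:ℂ)^2 * C‖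
        ≤ ‖A + (t:ℂ) * B‖ + ‖(t:ℂ)^2 * C‖ := norm_add_le _ _
      _ ≤ (‖A‖ + ‖(t:ℂ) * B‖) + ‖(t:ℂ)^2 * C‖ := by
          gcongr; exact norm_add_le _ _
      _ = ‖A‖ + t * ‖B‖ + t^2 * ‖C‖ := by
          rw [norm_mul, norm_mul, norm_pow, Complex.norm_real, Real.norm_eq_abs, abs_of_nonneg ht]
  refine le_trans htr ?_
  nlinarith [mul_nonneg hMu0 (sq_nonneg (t - 1)), mul_nonneg hMw0 (sq_nonneg t),
    mul_nonneg (mul_nonneg hMu0 hMu0) (sq_nonneg t), sq_nonneg t, sq_nonneg (t-1),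
    mul_nonneg hMw0 (sq_nonneg (t-1)), mul_nonneg (mul_nonneg hMu0 hMu0) (sq_nonneg (t-1)),
    norm_nonneg A, norm_nonneg B, norm_nonneg C,
    mul_le_mul_of_nonneg_left habsB ht,
    mul_le_mul_of_nonneg_left habsC (sq_nonneg t)]

end NORM

set_option maxHeartbeats 2000000 in
theorem stmt10 (n : ℕ) (hn : 2 ≤ n)
    (𝔥 : Submodule ℝ (Matrix (Fin (n+2)) (Fin (n+2)) ℂ))
    (h_sub : ∀ u ∈ 𝔥, inLieN n u)
    (h_bracket : ∀ u ∈ 𝔥, ∀ v ∈ 𝔥, u * v - v * u ∈ 𝔥)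
    (u : Matrix (Fin (n+2)) (Fin (n+2)) ℂ) (hu : u ∈ 𝔥)
    (hphi : phiC n u = 0)
    (hspan : Module.finrank ℂ
      (Submodule.span ℂ ({xV n u, yV n u} : Set (Fin (n+2) → ℂ))) = 1)
    (heq : sxR n u * nsqR n (yV n u) + syR n u * nsqR n (xV n u)
        + 2 * (dotC n (xV n u) (yV n u) * (starRingEnd ℂ) (etaC n u)).im = 0) :
    ∃ (h : ℕ → Matrix (Fin (n+2)) (Fin (n+2)) ℂ) (c C : ℝ),
      0 < c ∧ 0 < C ∧ (∀ m, h m ∈ expSet n 𝔥) ∧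
      Filter.Tendsto (fun m => entryNorm n (h m)) Filter.atTop Filter.atTop ∧
      ∀ m, c * (entryNorm n (h m)) ≤ rhoNorm n (h m) ∧
        rhoNorm n (h m) ≤ C * (entryNorm n (h m)) := by
  classical
  obtain ⟨htri, hJ⟩ := h_sub u hu
  have hrel : ∀ i j, (starRingEnd ℂ) (u (sig n j) i) + u (sig n i) j = 0 :=
    uRel hn ⟨htri, hJ⟩
  have hphi' : u ⟨0, by omega⟩ ⟨1, by omega⟩ = 0 := hphi
  -- parallelism from the span hypothesis
  have hx1 : xV n u ∈ Submodule.span ℂ ({xV n u, yV n u} : Set (Fin (n+2) → ℂ)) :=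
    Submodule.subset_span (by simp)
  have hy1 : yV n u ∈ Submodule.span ℂ ({xV n u, yV n u} : Set (Fin (n+2) → ℂ)) :=
    Submodule.subset_span (by simp)
  obtain ⟨v, hv0, hall⟩ := finrank_eq_one_iff'.mp hspan
  obtain ⟨a, ha⟩ := hall ⟨xV n u, hx1⟩
  obtain ⟨b, hb⟩ := hall ⟨yV n u, hy1⟩
  have hax : ∀ k, xV n u k = a * (v : Fin (n+2) → ℂ) k := by
    intro k
    have h5 := congrArg
      (fun z : ↥(Submodule.span ℂ ({xV n u, yV n u} : Set (Fin (n+2) → ℂ))) =>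
        (z : Fin (n+2) → ℂ) k) ha
    simpa using h5.symm
  have hby : ∀ k, yV n u k = b * (v : Fin (n+2) → ℂ) k := by
    intro k
    have h5 := congrArg
      (fun z : ↥(Submodule.span ℂ ({xV n u, yV n u} : Set (Fin (n+2) → ℂ))) =>
        (z : Fin (n+2) → ℂ) k) hb
    simpa using h5.symm
  have P1 := pP1 hax hby
  have P2 := pP2 hax hby
  have P3 := pP3 hax hby
  have P4 := pP4 hax hby
  have P5 := pP5 hax hby
  have hcast : ∀ z : Fin (n+2) → ℂ, dotC n z z = ((nsqR n z : ℝ) : ℂ) := by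
    intro z
    rw [dotC, nsqR]
    push_cast
    exact Finset.sum_congr rfl (fun k _ => Complex.mul_conj _)
  -- the key identity coming from `heq`
  have hQ : (u*u) ⟨0, Nat.succ_pos _⟩ ⟨n, lt_add_of_pos_right n two_pos⟩
        * u ⟨1, Nat.succ_lt_succ (Nat.succ_pos _)⟩ ⟨n+1, Nat.lt_succ_self _⟩
      - (u*u) ⟨0, Nat.succ_pos _⟩ ⟨n+1, Nat.lt_succ_self _⟩
        * u ⟨1, Nat.succ_lt_succ (Nat.succ_pos _)⟩ ⟨n, lt_add_of_pos_right n two_pos⟩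
      + u ⟨0, Nat.succ_pos _⟩ ⟨n, lt_add_of_pos_right n two_pos⟩
        * (u*u) ⟨1, Nat.succ_lt_succ (Nat.succ_pos _)⟩ ⟨n+1, Nat.lt_succ_self _⟩
      - u ⟨0, Nat.succ_pos _⟩ ⟨n+1, Nat.lt_succ_self _⟩
        * (u*u) ⟨1, Nat.succ_lt_succ (Nat.succ_pos _)⟩ ⟨n, lt_add_of_pos_right n two_pos⟩
      = 0 := by
    rw [w0n hn htri hrel hphi', w0n1 hn htri hrel hphi', w1n hn htri hrel hphi',
      w1n1 hn htri hrel hphi', u_1n1 hn hrel, u_1n hn hrel, u_0n1 hn hrel,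
      hcast (xV n u), hcast (yV n u)]
    rw [show u ⟨0, Nat.succ_pos _⟩ ⟨n, lt_add_of_pos_right n two_pos⟩ = etaC n u from rfl]
    have h1 : etaC n u * (starRingEnd ℂ) (dotC n (xV n u) (yV n u))
        = (starRingEnd ℂ) (dotC n (xV n u) (yV n u) * (starRingEnd ℂ) (etaC n u)) := by
      rw [map_mul, Complex.conj_conj]; ring
    have h2 := Complex.sub_conj (dotC n (xV n u) (yV n u) * (starRingEnd ℂ) (etaC n u))
    have heqC := congrArg (fun r : ℝ => (r : ℂ)) heq
    push_cast at heqC h2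
    linear_combination h2 - h1 + Complex.I * heqC
  have F1g := factF1 hn htri hrel hphi' P5
  have F2g := factF2 hn htri hrel hphi' P1 P2 P3 P4 hQ
  have hexp : ∀ t : ℝ, NormedSpace.exp (t • u) = hM n u t :=
    fun t => exp_formula hn htri hrel hphi' t
  -- nonnegativity facts
  have hXnn : 0 ≤ nsqR n (xV n u) := by
    rw [nsqR]; exact Finset.sum_nonneg fun k _ => Complex.normSq_nonneg _
  have hYnn : 0 ≤ nsqR n (yV n u) := by
    rw [nsqR]; exact Finset.sum_nonneg fun k _ => Complex.normSq_nonneg _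
  have hmX : 0 < max (nsqR n (xV n u)) (nsqR n (yV n u)) := by
    by_contra hc
    push_neg at hc
    have hXz : nsqR n (xV n u) = 0 :=
      le_antisymm ((le_max_left _ _).trans hc) hXnn
    have hYz : nsqR n (yV n u) = 0 :=
      le_antisymm ((le_max_right _ _).trans hc) hYnn
    rw [nsqR] at hXz hYz
    have hxz : xV n u = 0 := by
      funext k
      have hs := (Finset.sum_eq_zero_iff_of_nonneg
        (fun i (_ : i ∈ Finset.univ) => Complex.normSq_nonneg (xV n u i))).mp hXz
      have := Complex.normSq_eq_zero.mp (hs k (Finset.mem_univ k))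
      simpa using this
    have hyz : yV n u = 0 := by
      funext k
      have hs := (Finset.sum_eq_zero_iff_of_nonneg
        (fun i (_ : i ∈ Finset.univ) => Complex.normSq_nonneg (yV n u i))).mp hYz
      have := Complex.normSq_eq_zero.mp (hs k (Finset.mem_univ k))
      simpa using this
    rw [hxz, hyz] at hspan
    rw [Set.pair_eq_singleton, Submodule.span_zero_singleton] at hspan
    rw [finrank_bot ℂ (Fin (n+2) → ℂ)] at hspan
    exact absurd hspan (by norm_num)
  -- basic entries of hM
  have hne01 : (⟨0, Nat.succ_pos _⟩ : Fin (n+2)) ≠ ⟨1, Nat.succ_lt_succ (Nat.succ_pos _)⟩ :=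
    Fin.ne_of_val_ne (show (0:ℕ) ≠ 1 by omega)
  have hne0n1 : (⟨0, Nat.succ_pos _⟩ : Fin (n+2)) ≠ ⟨n+1, Nat.lt_succ_self _⟩ :=
    Fin.ne_of_val_ne (show (0:ℕ) ≠ n+1 by omega)
  have hne1n : (⟨1, Nat.succ_lt_succ (Nat.succ_pos _)⟩ : Fin (n+2))
      ≠ ⟨n, lt_add_of_pos_right n two_pos⟩ :=
    Fin.ne_of_val_ne (show (1:ℕ) ≠ n by omega)
  have hc1 : ∀ t : ℝ, hM n u t ⟨0, Nat.succ_pos _⟩ ⟨0, Nat.succ_pos _⟩ = 1 := by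
    intro t
    rw [hM_apply, if_pos rfl, htri _ _ (le_refl _),
      wcol hn htri hrel hphi' _ _ (show (0:ℕ) < n by omega)]
    ring
  have hc2 : ∀ (t : ℝ) (i : Fin (n+2)), i ≠ ⟨0, Nat.succ_pos _⟩ →
      hM n u t i ⟨0, Nat.succ_pos _⟩ = 0 := by
    intro t i hi
    rw [hM_apply, if_neg hi, ucol0 htri,
      wcol hn htri hrel hphi' _ _ (show (0:ℕ) < n by omega)]
    ring
  have hc3 : ∀ t : ℝ, hM n u t ⟨1, Nat.succ_lt_succ (Nat.succ_pos _)⟩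
      ⟨1, Nat.succ_lt_succ (Nat.succ_pos _)⟩ = 1 := by
    intro t
    rw [hM_apply, if_pos rfl, ucol1 htri hphi',
      wcol hn htri hrel hphi' _ _ (show (1:ℕ) < n by omega)]
    ring
  have hc4 : ∀ t : ℝ, hM n u t ⟨0, Nat.succ_pos _⟩
      ⟨1, Nat.succ_lt_succ (Nat.succ_pos _)⟩ = 0 := by
    intro t
    rw [hM_apply, if_neg hne01, ucol1 htri hphi',
      wcol hn htri hrel hphi' _ _ (show (1:ℕ) < n by omega)]
    ring
  -- lower bound : entryNorm ≤ rhoNorm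
  have hlow : ∀ t : ℝ, entryNorm n (hM n u t) ≤ rhoNorm n (hM n u t) := by
    intro t
    apply entryNorm_le
    intro i j
    by_cases hi0 : i = ⟨0, Nat.succ_pos _⟩
    · have hm := minor_le_rhoNorm (hM n u t) ⟨0, Nat.succ_pos _⟩
        ⟨1, Nat.succ_lt_succ (Nat.succ_pos _)⟩ j ⟨1, Nat.succ_lt_succ (Nat.succ_pos _)⟩
      rw [hc3 t, hc4 t, mul_one, zero_mul, sub_zero] at hm
      rw [hi0]
      exact hm
    · have hm := minor_le_rhoNorm (hM n u t) i ⟨0, Nat.succ_pos _⟩ j ⟨0, Nat.succ_pos _⟩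
      rw [hc1 t, hc2 t i hi0, mul_one, zero_mul, sub_zero] at hm
      exact hm
  -- growth entries
  have hg1 : ∀ t : ℝ, (t^2/2) * nsqR n (xV n u) ≤ entryNorm n (hM n u t) := by
    intro t
    have he : hM n u t ⟨0, Nat.succ_pos _⟩ ⟨n+1, Nat.lt_succ_self _⟩
        = ((-(t^2/2 * nsqR n (xV n u)) : ℝ) : ℂ) + (((t * sxR n u) : ℝ) : ℂ) * Complex.I := by
      rw [hM_apply, if_neg hne0n1, u_0n1 hn hrel, w0n1 hn htri hrel hphi', hcast (xV n u)]
      push_cast; ring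
    have hre : (hM n u t ⟨0, Nat.succ_pos _⟩ ⟨n+1, Nat.lt_succ_self _⟩).re
        = -(t^2/2 * nsqR n (xV n u)) := by
      rw [he]
      simp only [Complex.add_re, Complex.ofReal_re, Complex.mul_re, Complex.ofReal_im,
        Complex.I_re, Complex.I_im]
      ring
    have hv : 0 ≤ t^2/2 * nsqR n (xV n u) := mul_nonneg (by positivity) hXnn
    calc (t^2/2) * nsqR n (xV n u)
        ≤ |(hM n u t ⟨0, Nat.succ_pos _⟩ ⟨n+1, Nat.lt_succ_self _⟩).re| := by
          rw [hre, abs_neg, abs_of_nonneg hv]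
      _ ≤ ‖hM n u t ⟨0, Nat.succ_pos _⟩ ⟨n+1, Nat.lt_succ_self _⟩‖ :=
          Complex.abs_re_le_norm _
      _ ≤ entryNorm n (hM n u t) := abs_entry_le_entryNorm _ _ _
  have hg2 : ∀ t : ℝ, (t^2/2) * nsqR n (yV n u) ≤ entryNorm n (hM n u t) := by
    intro t
    have he : hM n u t ⟨1, Nat.succ_lt_succ (Nat.succ_pos _)⟩ ⟨n, lt_add_of_pos_right n two_pos⟩
        = ((-(t^2/2 * nsqR n (yV n u)) : ℝ) : ℂ) + (((t * syR n u) : ℝ) : ℂ) * Complex.I := by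
      rw [hM_apply, if_neg hne1n, u_1n hn hrel, w1n hn htri hrel hphi', hcast (yV n u)]
      push_cast; ring
    have hre : (hM n u t ⟨1, Nat.succ_lt_succ (Nat.succ_pos _)⟩
        ⟨n, lt_add_of_pos_right n two_pos⟩).re = -(t^2/2 * nsqR n (yV n u)) := by
      rw [he]
      simp only [Complex.add_re, Complex.ofReal_re, Complex.mul_re, Complex.ofReal_im,
        Complex.I_re, Complex.I_im]
      ring
    have hv : 0 ≤ t^2/2 * nsqR n (yV n u) := mul_nonneg (by positivity) hYnn
    calc (t^2/2) * nsqR n (yV n u)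
        ≤ |(hM n u t ⟨1, Nat.succ_lt_succ (Nat.succ_pos _)⟩
            ⟨n, lt_add_of_pos_right n two_pos⟩).re| := by
          rw [hre, abs_neg, abs_of_nonneg hv]
      _ ≤ ‖hM n u t ⟨1, Nat.succ_lt_succ (Nat.succ_pos _)⟩
            ⟨n, lt_add_of_pos_right n two_pos⟩‖ := Complex.abs_re_le_norm _
      _ ≤ entryNorm n (hM n u t) := abs_entry_le_entryNorm _ _ _
  have hgeM : ∀ m : ℕ, (max (nsqR n (xV n u)) (nsqR n (yV n u)) / 2) * (m:ℝ)^2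
      ≤ entryNorm n (hM n u (m:ℝ)) := by
    intro m
    rcases max_cases (nsqR n (xV n u)) (nsqR n (yV n u)) with ⟨hmax, _⟩ | ⟨hmax, _⟩
    · calc (max (nsqR n (xV n u)) (nsqR n (yV n u)) / 2) * (m:ℝ)^2
          = ((m:ℝ)^2/2) * nsqR n (xV n u) := by rw [hmax]; ring
        _ ≤ entryNorm n (hM n u (m:ℝ)) := hg1 (m:ℝ)
    · calc (max (nsqR n (xV n u)) (nsqR n (yV n u)) / 2) * (m:ℝ)^2
          = ((m:ℝ)^2/2) * nsqR n (yV n u) := by rw [hmax]; ring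
        _ ≤ entryNorm n (hM n u (m:ℝ)) := hg2 (m:ℝ)
  have htend : Filter.Tendsto (fun m : ℕ => entryNorm n (hM n u (m:ℝ)))
      Filter.atTop Filter.atTop := by
    apply Filter.tendsto_atTop_mono hgeM
    apply Filter.Tendsto.const_mul_atTop (half_pos hmX)
    exact (Filter.tendsto_pow_atTop (by norm_num : (2:ℕ) ≠ 0)).comp tendsto_natCast_atTop_atTop
  have hK0 : (0:ℝ) ≤ 2 + 4*entryNorm n u + 2*(entryNorm n u)^2 + 2*entryNorm n (u*u) := by
    nlinarith [entryNorm_nonneg u, entryNorm_nonneg (u*u), sq_nonneg (entryNorm n u)]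
  refine ⟨fun m : ℕ => hM n u (m:ℝ), 1,
    2*(2 + 4*entryNorm n u + 2*(entryNorm n u)^2 + 2*entryNorm n (u*u))
      * (1 + 2 / max (nsqR n (xV n u)) (nsqR n (yV n u))),
    one_pos, ?_, ?_, ?_, ?_⟩
  · have hKpos : (0:ℝ) < 2 + 4*entryNorm n u + 2*(entryNorm n u)^2 + 2*entryNorm n (u*u) := by
      nlinarith [entryNorm_nonneg u, entryNorm_nonneg (u*u), sq_nonneg (entryNorm n u)]
    have hq : (0:ℝ) < 2 / max (nsqR n (xV n u)) (nsqR n (yV n u)) := div_pos two_pos hmX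
    have := mul_pos two_pos hKpos
    nlinarith [this, hq]
  · intro m
    exact ⟨(m:ℝ) • u, 𝔥.smul_mem _ hu, hexp (m:ℝ)⟩
  · exact htend
  · intro m
    constructor
    · rw [one_mul]; exact hlow (m:ℝ)
    · have h1 : rhoNorm n (hM n u (m:ℝ))
          ≤ 2*(2 + 4*entryNorm n u + 2*(entryNorm n u)^2 + 2*entryNorm n (u*u))*(1+(m:ℝ)^2) :=
        rhoNorm_le _ (fun i r j s => minor_bound F1g F2g (m:ℝ) (Nat.cast_nonneg m) i r j s)
      have h2 : 1 ≤ entryNorm n (hM n u (m:ℝ)) := by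
        have h7 := abs_entry_le_entryNorm (hM n u (m:ℝ)) ⟨0, Nat.succ_pos _⟩ ⟨0, Nat.succ_pos _⟩
        rw [hc1 (m:ℝ)] at h7
        simpa using h7
      have h3 := hgeM m
      have hq0 : (0:ℝ) ≤ 2 / max (nsqR n (xV n u)) (nsqR n (yV n u)) :=
        le_of_lt (div_pos two_pos hmX)
      have hm2 : (m:ℝ)^2 ≤ (2 / max (nsqR n (xV n u)) (nsqR n (yV n u)))
          * entryNorm n (hM n u (m:ℝ)) := by
        have h8 := mul_le_mul_of_nonneg_left h3 hq0
        calc (m:ℝ)^2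
            = (2 / max (nsqR n (xV n u)) (nsqR n (yV n u)))
              * ((max (nsqR n (xV n u)) (nsqR n (yV n u)) / 2) * (m:ℝ)^2) := by
              field_simp
          _ ≤ _ := h8
      have hdiff : (0:ℝ) ≤ entryNorm n (hM n u (m:ℝ))
          + (2 / max (nsqR n (xV n u)) (nsqR n (yV n u))) * entryNorm n (hM n u (m:ℝ))
          - 1 - (m:ℝ)^2 := by
        have hEq := mul_nonneg hq0 (le_trans zero_le_one h2)
        linarith
      have hprod := mul_nonneg hK0 hdiff
      linarith [h1, hprod]
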